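/- Let K be a field with an archimedean absolute value |·| (satisfying the triangle inequality), let f(z) = z^d + b_{d-1}z^{d-1} + ... + b_0 with d ≥ 2, a ∈ K*, and φ(x,y) = (ay, x + f(y)). Let C_f = max over 0 ≤ i < d of max(|b_i|^{1/(d-i)}, 1), and B⁺ = {(x,y) : |y| > (d+2)·max(|x|^{1/d}, C_f, |a|^{1/(d-1)})}. Then B⁺ is closed under φ, and for (x,y) ∈ B⁺: (1/(d+2))·|y|^d ≤ |x + f(y)| ≤ ((2d+3)/(d+2))·|y|^d and ‖φ(x,y)‖ = |x+f(y)|. -/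
import Mathlib


open Polynomial

private lemma rpow_pow_aux (t : ℝ) (ht : 0 ≤ t) (n : ℕ) (hn : n ≠ 0) :
    (t ^ ((1:ℝ)/(n:ℝ))) ^ n = t := by
  rw [← Real.rpow_natCast (t ^ ((1:ℝ)/(n:ℝ))) n, ← Real.rpow_mul ht, one_div,
    inv_mul_cancel₀ (by exact_mod_cast hn), Real.rpow_one]

private lemma rpow_le_pow_aux {t M : ℝ} (ht : 0 ≤ t) {n : ℕ} (hn : n ≠ 0)
    (h : t ^ ((1:ℝ)/(n:ℝ)) ≤ M) : t ≤ M ^ n := by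
  calc t = (t ^ ((1:ℝ)/(n:ℝ))) ^ n := (rpow_pow_aux t ht n hn).symm
    _ ≤ M ^ n := pow_le_pow_left₀ (Real.rpow_nonneg ht _) h n

set_option maxHeartbeats 1000000 in
/-- archimedean escape-region estimate for the Hénon map
`φ(x,y) = (ay, x + f(y))`: the region `B⁺` (with the factor `d+2`) is closed
under `φ`, and on `B⁺` one has `(1/(d+2))|y|^d ≤ |x+f(y)| ≤ ((2d+3)/(d+2))|y|^d`
and `‖φ(x,y)‖ = |x+f(y)|`. -/
theorem stmt2 {K : Type*} [Field K] (v : AbsoluteValue K ℝ)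
    (d : ℕ) (hd : 2 ≤ d)
    (f : K[X]) (hmonic : f.Monic) (hdeg : f.natDegree = d)
    (a : K) (ha : a ≠ 0)
    (φ : K × K → K × K) (hφ : ∀ P, φ P = (a * P.2, P.1 + f.eval P.2))
    (Cf : ℝ)
    (hCf : Cf = (Finset.range d).sup' (Finset.nonempty_range_iff.mpr (by omega))
      (fun i => max ((v (f.coeff i)) ^ ((1 : ℝ) / ((d : ℝ) - (i : ℝ)))) 1))
    (Bplus : Set (K × K))
    (hB : Bplus = {P : K × K | v P.2 > ((d : ℝ) + 2) *
      max ((v P.1) ^ ((1 : ℝ) / (d : ℝ)))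
        (max Cf ((v a) ^ ((1 : ℝ) / ((d : ℝ) - 1))))}) :
    (∀ P ∈ Bplus, φ P ∈ Bplus) ∧
    (∀ P ∈ Bplus,
      (1 / ((d : ℝ) + 2)) * (v P.2) ^ d ≤ v (P.1 + f.eval P.2) ∧
      v (P.1 + f.eval P.2) ≤ ((2 * (d : ℝ) + 3) / ((d : ℝ) + 2)) * (v P.2) ^ d ∧
      max (v (φ P).1) (v (φ P).2) = v (P.1 + f.eval P.2)) := by
  obtain ⟨e, rfl⟩ : ∃ e, d = e + 2 := ⟨d - 2, by omega⟩
  set R : ℝ := ((e + 2 : ℕ) : ℝ) + 2 with hRdef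
  have hRe : R = (e : ℝ) + 4 := by rw [hRdef]; push_cast; ring
  have he0 : (0:ℝ) ≤ (e:ℝ) := Nat.cast_nonneg e
  have hR4 : (4:ℝ) ≤ R := by rw [hRe]; linarith
  have hRpos : (0:ℝ) < R := by linarith
  have h1Cf : (1:ℝ) ≤ Cf := by
    rw [hCf]
    exact Finset.le_sup'_of_le _ (Finset.mem_range.mpr (by omega : 0 < e + 2))
      (le_max_right _ 1)
  -- main work
  have main : ∀ x y : K, (x, y) ∈ Bplus →
      (φ (x, y) ∈ Bplus ∧
        ((v y)^(e+2)/2 ≤ v (x + f.eval y) ∧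
         v (x + f.eval y) ≤ (3/2) * (v y)^(e+2) ∧
         max (v (a * y)) (v (x + f.eval y)) = v (x + f.eval y))) := by
    intro x y hP
    rw [hB] at hP
    simp only [Set.mem_setOf_eq] at hP
    set M : ℝ := max ((v x) ^ ((1:ℝ) / ((e + 2 : ℕ) : ℝ)))
      (max Cf ((v a) ^ ((1:ℝ) / (((e + 2 : ℕ) : ℝ) - 1)))) with hMdef
    have hyM : R * M < v y := hP
    have hM1 : (1:ℝ) ≤ M := le_trans h1Cf (le_trans (le_max_left _ _) (le_max_right _ _))
    have hM0 : (0:ℝ) ≤ M := by linarith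
    have hvyR : R < v y := by nlinarith
    have hvy4 : (4:ℝ) ≤ v y := by linarith
    have hvy1 : (1:ℝ) ≤ v y := by linarith
    have hvypos : (0:ℝ) < v y := by linarith
    have hMy : M ≤ v y / R := by rw [le_div_iff₀ hRpos]; nlinarith
    have hxM : v x ≤ M ^ (e+2) :=
      rpow_le_pow_aux (v.nonneg x) (by omega) (le_max_left _ _)
    have haM : v a ≤ M ^ (e+1) := by
      have h' : (v a) ^ ((1:ℝ) / (((e + 2 : ℕ) : ℝ) - 1)) ≤ M :=
        le_trans (le_max_right Cf _) (le_max_right _ _)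
      have hc : ((e + 2 : ℕ) : ℝ) - 1 = ((e + 1 : ℕ) : ℝ) := by push_cast; ring
      rw [hc] at h'
      exact rpow_le_pow_aux (v.nonneg a) (by omega) h'
    have hbM : ∀ i, i < e + 2 → v (f.coeff i) ≤ M ^ (e + 2 - i) := by
      intro i hi
      have h' : (v (f.coeff i)) ^ ((1:ℝ) / (((e+2:ℕ):ℝ) - (i:ℝ))) ≤ Cf := by
        rw [hCf]
        exact Finset.le_sup'_of_le _ (Finset.mem_range.mpr hi) (le_max_left _ _)
      have hc : ((e + 2 : ℕ) : ℝ) - (i:ℝ) = ((e + 2 - i : ℕ) : ℝ) := by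
        rw [Nat.cast_sub (by omega : i ≤ e + 2)]
      rw [hc] at h'
      have h'' : v (f.coeff i) ≤ Cf ^ (e + 2 - i) :=
        rpow_le_pow_aux (v.nonneg _) (by omega) h'
      refine le_trans h'' (pow_le_pow_left₀ (by linarith) ?_ _)
      exact le_trans (le_max_left _ _) (le_max_right _ _)
    -- per-term bounds
    have hterm : ∀ i, i < e + 2 →
        v (f.coeff i) * (v y)^i ≤ (v y)^(e+2) / R^(e+2-i) := by
      intro i hi
      have h1 : v (f.coeff i) ≤ (v y / R)^(e+2-i) :=
        le_trans (hbM i hi) (pow_le_pow_left₀ hM0 hMy _)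
      have h2 : v (f.coeff i) * (v y)^i ≤ (v y / R)^(e+2-i) * (v y)^i :=
        mul_le_mul_of_nonneg_right h1 (pow_nonneg (v.nonneg y) i)
      refine h2.trans (le_of_eq ?_)
      rw [div_pow, div_mul_eq_mul_div, ← pow_add]
      congr 2
      omega
    -- the sum
    set S : K := ∑ i ∈ Finset.range (e+2), f.coeff i * y ^ i with hSdef
    have hvS : v S ≤ ((e:ℝ)+1) * ((v y)^(e+2)/R^2) + (v y)^(e+2)/R := by
      have h0 : v S ≤ ∑ i ∈ Finset.range (e+2), v (f.coeff i) * (v y) ^ i := by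
        refine le_trans (v.sum_le _ _) (le_of_eq ?_)
        refine Finset.sum_congr rfl fun i _ => ?_
        rw [map_mul, map_pow]
      rw [Finset.sum_range_succ] at h0
      have h1 : ∑ i ∈ Finset.range (e+1), v (f.coeff i) * (v y)^i
          ≤ ((e:ℝ)+1) * ((v y)^(e+2)/R^2) := by
        have hb : ∀ i ∈ Finset.range (e+1),
            v (f.coeff i) * (v y)^i ≤ (v y)^(e+2)/R^2 := by
          intro i hi
          have hi' : i < e + 1 := Finset.mem_range.mp hi
          refine (hterm i (by omega)).trans ?_
          have hpow : R^2 ≤ R^(e+2-i) := pow_le_pow_right₀ (by linarith) (by omega)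
          exact div_le_div_of_nonneg_left (pow_nonneg (v.nonneg y) _)
            (pow_pos hRpos _) hpow
        have := Finset.sum_le_card_nsmul _ _ _ hb
        rwa [Finset.card_range, nsmul_eq_mul, Nat.cast_add, Nat.cast_one] at this
      have h2 : v (f.coeff (e+1)) * (v y)^(e+1) ≤ (v y)^(e+2)/R := by
        refine (hterm (e+1) (by omega)).trans (le_of_eq ?_)
        congr 1
        · rw [show e + 2 - (e+1) = 1 by omega, pow_one]
      linarith
    have hTnn : (0:ℝ) ≤ (v y)^(e+2) := pow_nonneg (v.nonneg y) _
    have hxb : v x ≤ (v y)^(e+2)/R^2 := by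
      refine le_trans hxM ?_
      refine le_trans (pow_le_pow_left₀ hM0 hMy _) ?_
      rw [div_pow]
      have hpow : R^2 ≤ R^(e+2) := pow_le_pow_right₀ (by linarith) (by omega)
      exact div_le_div_of_nonneg_left hTnn (pow_pos hRpos _) hpow
    have hRne : R ≠ 0 := ne_of_gt hRpos
    have hhalfc : ((e:ℝ)+1) * (1/R^2) + 1/R + 1/R^2 ≤ 1/2 := by
      rw [hRe, ← sub_nonneg]
      have h4 : ((e:ℝ)+4) ≠ 0 := by positivity
      have hkey : 1/2 - (((e:ℝ)+1) * (1/((e:ℝ)+4)^2) + 1/((e:ℝ)+4) + 1/((e:ℝ)+4)^2)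
          = (((e:ℝ)+2)^2) / (2*((e:ℝ)+4)^2) := by
        field_simp
        ring
      rw [hkey]
      positivity
    have hxS : v x + v S ≤ (v y)^(e+2)/2 := by
      have hcomb : v x + v S ≤ (v y)^(e+2) * (((e:ℝ)+1) * (1/R^2) + 1/R + 1/R^2) := by
        have hsum2 : v x + v S ≤ (v y)^(e+2)/R^2
            + (((e:ℝ)+1) * ((v y)^(e+2)/R^2) + (v y)^(e+2)/R) := by linarith
        refine hsum2.trans (le_of_eq ?_)
        ring
      have h5 := mul_le_mul_of_nonneg_left hhalfc hTnn
      have h6 : (v y)^(e+2) * (1/2) = (v y)^(e+2)/2 := by ring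
      linarith
    -- decomposition of x + f(y)
    have hfy : x + f.eval y = (x + S) + y^(e+2) := by
      have h1 : f.eval y = ∑ i ∈ Finset.range (e + 2 + 1), f.coeff i * y ^ i := by
        rw [Polynomial.eval_eq_sum_range, hdeg]
      have h2 : f.coeff (e+2) = 1 := by rw [← hdeg]; exact hmonic.coeff_natDegree
      rw [h1, Finset.sum_range_succ, h2, one_mul, hSdef]
      ring
    have hvxS : v (x + S) ≤ (v y)^(e+2)/2 := le_trans (v.add_le x S) hxS
    have hlow : (v y)^(e+2)/2 ≤ v (x + f.eval y) := by
      have h1 : v (y^(e+2)) ≤ v (x + f.eval y) + v (x + S) := by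
        have heq : y^(e+2) = (x + f.eval y) - (x + S) := by rw [hfy]; ring
        rw [heq, sub_eq_add_neg]
        exact le_trans (v.add_le _ _) (by rw [v.map_neg])
      rw [map_pow] at h1
      linarith
    have hup : v (x + f.eval y) ≤ (3/2) * (v y)^(e+2) := by
      have h1 : v (x + f.eval y) ≤ v (x + S) + v (y^(e+2)) := by
        rw [hfy]; exact v.add_le _ _
      rw [map_pow] at h1
      linarith
    have hw := hlow
    have hvwpos : (0:ℝ) < v (x + f.eval y) :=
      lt_of_lt_of_le (div_pos (pow_pos hvypos _) two_pos) hlow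
    -- norm statement
    have hvay : v (a * y) ≤ (v y)^(e+2)/2 := by
      rw [map_mul]
      have h1 : v a * v y ≤ M^(e+1) * v y := mul_le_mul_of_nonneg_right haM (v.nonneg y)
      have h2 : M^(e+1) * v y ≤ (v y / R)^(e+1) * v y :=
        mul_le_mul_of_nonneg_right (pow_le_pow_left₀ hM0 hMy _) (v.nonneg y)
      have h3 : (v y / R)^(e+1) * v y = (v y)^(e+2) / R^(e+1) := by
        rw [div_pow, div_mul_eq_mul_div, ← pow_succ]
      have h4 : (v y)^(e+2)/R^(e+1) ≤ (v y)^(e+2)/2 := by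
        have hpow : (2:ℝ) ≤ R^(e+1) :=
          le_trans (by linarith) (le_self_pow₀ (by linarith) (by omega))
        exact div_le_div_of_nonneg_left hTnn (by norm_num) hpow
      linarith
    have hnorm : max (v (a * y)) (v (x + f.eval y)) = v (x + f.eval y) :=
      max_eq_right (hvay.trans hlow)
    -- closure
    have hvy2 : v y ≤ (v y)^(e+2)/2 := by
      have h1 : (v y)^2 ≤ (v y)^(e+2) := pow_le_pow_right₀ hvy1 (by omega)
      have h2 : 2 * v y ≤ v y * v y := by nlinarith [hvy4, hvypos]
      have h3 : v y * v y = (v y)^2 := by ring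
      linarith
    have hCle : R * (max Cf ((v a) ^ ((1:ℝ) / (((e+2:ℕ):ℝ) - 1)))) < v (x + f.eval y) := by
      have h1 : max Cf ((v a) ^ ((1:ℝ) / (((e+2:ℕ):ℝ) - 1))) ≤ M := le_max_right _ _
      have h2 : R * max Cf ((v a) ^ ((1:ℝ) / (((e+2:ℕ):ℝ) - 1))) ≤ R * M :=
        mul_le_mul_of_nonneg_left h1 hRpos.le
      exact lt_of_le_of_lt h2 (lt_of_lt_of_le hyM (hvy2.trans hlow))
    -- core power inequality
    have hA2 : (2:ℝ)^(e+2) ≤ (v y)^(2*e+1) := by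
      calc (2:ℝ)^(e+2) ≤ (2:ℝ)^(2*(2*e+1)) := pow_le_pow_right₀ one_le_two (by omega)
        _ = ((2:ℝ)^2)^(2*e+1) := by rw [← pow_mul]
        _ ≤ (v y)^(2*e+1) := by
            refine pow_le_pow_left₀ (by norm_num) ?_ _
            norm_num; linarith
    have hX1 : R * (2:ℝ)^(e+2) < (v y)^(2*e+2) := by
      have h1 : (v y)^(2*e+2) = (v y) * (v y)^(2*e+1) := by ring
      have h2 : R * (2:ℝ)^(e+2) ≤ R * (v y)^(2*e+1) :=
        mul_le_mul_of_nonneg_left hA2 hRpos.le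
      have h3 : R * (v y)^(2*e+1) < (v y) * (v y)^(2*e+1) :=
        mul_lt_mul_of_pos_right hvyR (by positivity)
      rw [h1]; linarith
    have hX2 : (v y)^(2*e+2) ≤ (v y)^((e+2)*(e+1)) :=
      pow_le_pow_right₀ hvy1 (by nlinarith)
    have hX : R * (v y)^(e+2) < ((v y)^(e+2)/2)^(e+2) := by
      rw [div_pow, lt_div_iff₀ (by positivity : (0:ℝ) < 2^(e+2))]
      have hsplit : ((v y)^(e+2))^(e+2) = (v y)^(e+2) * (v y)^((e+2)*(e+1)) := by
        rw [← pow_mul, ← pow_add]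
        congr 1
        ring
      rw [hsplit]
      calc R * (v y)^(e+2) * 2^(e+2) = (v y)^(e+2) * (R * 2^(e+2)) := by ring
        _ < (v y)^(e+2) * (v y)^((e+2)*(e+1)) :=
            mul_lt_mul_of_pos_left (lt_of_lt_of_le hX1 hX2) (pow_pos hvypos _)
    have hcore : R^(e+2) * v (a * y) < (v (x + f.eval y))^(e+2) := by
      have hva : v (a * y) = v a * v y := map_mul v a y
      have step1 : R^(e+2) * v (a*y) ≤ R * ((R*M)^(e+1) * v y) := by
        rw [hva]
        calc R^(e+2) * (v a * v y) = R * (R^(e+1) * v a * v y) := by ring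
          _ ≤ R * (R^(e+1) * M^(e+1) * v y) := by
              refine mul_le_mul_of_nonneg_left ?_ hRpos.le
              refine mul_le_mul_of_nonneg_right ?_ (v.nonneg y)
              exact mul_le_mul_of_nonneg_left haM (pow_nonneg hRpos.le _)
          _ = R * ((R*M)^(e+1) * v y) := by rw [mul_pow]
      have step2 : R * ((R*M)^(e+1) * v y) < R * ((v y)^(e+1) * v y) := by
        refine mul_lt_mul_of_pos_left ?_ hRpos
        refine mul_lt_mul_of_pos_right ?_ hvypos
        exact pow_lt_pow_left₀ hyM (mul_nonneg hRpos.le hM0) (by omega)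
      have step3 : R * ((v y)^(e+1) * v y) = R * (v y)^(e+2) := by ring
      have step5 : ((v y)^(e+2)/2)^(e+2) ≤ (v (x + f.eval y))^(e+2) :=
        pow_le_pow_left₀ (div_nonneg hTnn (by norm_num)) hlow _
      calc R^(e+2) * v (a*y) ≤ R * ((R*M)^(e+1) * v y) := step1
        _ < R * ((v y)^(e+1) * v y) := step2
        _ = R * (v y)^(e+2) := step3
        _ < ((v y)^(e+2)/2)^(e+2) := hX
        _ ≤ (v (x + f.eval y))^(e+2) := step5
    have hAle : R * ((v (a * y)) ^ ((1:ℝ) / ((e+2:ℕ):ℝ))) < v (x + f.eval y) := by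
      refine lt_of_pow_lt_pow_left₀ (e+2) hvwpos.le ?_
      rw [mul_pow, rpow_pow_aux (v (a*y)) (v.nonneg _) (e+2) (by omega)]
      exact hcore
    have hmem : φ (x, y) ∈ Bplus := by
      rw [hφ, hB]
      simp only [Set.mem_setOf_eq]
      have hmax : max ((v (a * y)) ^ ((1:ℝ) / ((e+2:ℕ):ℝ)))
          (max Cf ((v a) ^ ((1:ℝ) / (((e+2:ℕ):ℝ) - 1)))) < v (x + f.eval y) / R := by
        refine max_lt ?_ ?_
        · rw [lt_div_iff₀ hRpos, mul_comm]; exact hAle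
        · rw [lt_div_iff₀ hRpos, mul_comm]; exact hCle
      have := (lt_div_iff₀ hRpos).mp hmax
      rw [mul_comm] at this
      exact this
    exact ⟨hmem, hlow, hup, hnorm⟩
  constructor
  · rintro ⟨x, y⟩ hP
    exact (main x y hP).1
  · rintro ⟨x, y⟩ hP
    obtain ⟨-, hlow, hup, hnorm⟩ := main x y hP
    refine ⟨?_, ?_, ?_⟩
    · have h2 : (1 / (((e+2:ℕ):ℝ) + 2)) * (v y)^(e+2) ≤ (v y)^(e+2)/2 := by
        rw [hRdef] at *
        have : (1:ℝ)/R ≤ 1/2 := by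
          rw [div_le_div_iff₀ hRpos (by norm_num)]; linarith
        nlinarith [pow_nonneg (v.nonneg y) (e+2)]
      exact le_trans h2 hlow
    · refine le_trans hup ?_
      have hcc : (3:ℝ)/2 ≤ (2*((e+2:ℕ):ℝ)+3)/R := by
        rw [hRe, div_le_div_iff₀ (by norm_num) (by linarith : (0:ℝ) < (e:ℝ)+4)]
        push_cast
        linarith
      exact mul_le_mul_of_nonneg_right hcc (pow_nonneg (v.nonneg y) _)
    · rw [hφ]
      exact hnorm
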